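/- arXiv:2201.09350 — 2 statements merged into one kernel-verified Lean document; each statement's English description precedes it below -/
import Mathlib

section
/- Under PRDS, for each null index k and each r ∈ {1,…,K}, P(R_𝒟 = r | P_k ≤ αr/K) ≤ β_{k,r} − β_{k,r+1}, where β_{k,r} = P(R_𝒟 ≥ r | P_k ≤ αr/K) and β_{k,K+1} = 0; consequently Σ_{r=1}^K P(R_𝒟 = r | P_k ≤ αr/K) ≤ 1. -/
open MeasureTheory ProbabilityTheory Finset
open scoped ENNReal Classical

noncomputable section

/-- The `i`-th smallest value (0-indexed) among `p 0, …, p (K-1)`. -/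
def sortAsc {K : ℕ} (p : Fin K → ℝ) : Fin K → ℝ := p ∘ Tuple.sort p

/-- The `i`-th largest value (0-indexed) among `e 0, …, e (K-1)`. -/
def sortDesc {K : ℕ} (e : Fin K → ℝ) : Fin K → ℝ := e ∘ Tuple.sort (fun j => -e j)

/-- `k* = max {k : K p_(k) / k ≤ α}` (with `max ∅ = 0`), the BH rejection count. -/
def bhCount (K : ℕ) (α : ℝ) (p : Fin K → ℝ) : ℕ :=
  (univ.filter (fun i : Fin K => (K : ℝ) * sortAsc p i / (i.1 + 1) ≤ α)).sup
    (fun i => i.1 + 1)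

/-- The BH procedure rejects the hypotheses carrying the `k*` smallest p-values. -/
def bhRejects (K : ℕ) (α : ℝ) (p : Fin K → ℝ) : Finset (Fin K) :=
  univ.filter (fun k => ∃ i : Fin K, i.1 + 1 ≤ bhCount K α p ∧ p k ≤ sortAsc p i)

/-- `k* = max {k : k e_[k] / K ≥ 1/α}`, the e-BH rejection count. -/
def ebhCount (K : ℕ) (α : ℝ) (e : Fin K → ℝ) : ℕ :=
  (univ.filter (fun i : Fin K => 1 / α ≤ (i.1 + 1) * sortDesc e i / K)).sup
    (fun i => i.1 + 1)

/-- The e-BH procedure rejects the hypotheses carrying the `k*` largest e-values. -/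
def ebhRejects (K : ℕ) (α : ℝ) (e : Fin K → ℝ) : Finset (Fin K) :=
  univ.filter (fun k => ∃ i : Fin K, i.1 + 1 ≤ ebhCount K α e ∧ sortDesc e i ≤ e k)

/-- Simes function `S_K(p) = min_k (K/k) p_(k)`. -/
def simes (K : ℕ) (p : Fin K → ℝ) : ℝ := ⨅ i : Fin K, (K : ℝ) / (i.1 + 1) * sortAsc p i

/-- Harmonic number `ℓ_K = ∑_{k=1}^K 1/k`. -/
def harm (K : ℕ) : ℝ := ∑ k ∈ Finset.Icc 1 K, (1 : ℝ) / k

/-- An increasing (upper) subset of `ℝ^K`. -/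
def IncreasingSet {K : ℕ} (A : Set (Fin K → ℝ)) : Prop := ∀ x ∈ A, ∀ y, x ≤ y → y ∈ A

/-- Positive regression dependence on the subset `N` of nulls. -/
def PRDS {Ω : Type*} [MeasurableSpace Ω] (μ : Measure Ω) {K : ℕ}
    (P : Fin K → Ω → ℝ) (N : Finset (Fin K)) : Prop :=
  ∀ k ∈ N, ∀ A : Set (Fin K → ℝ), MeasurableSet A → IncreasingSet A →
    Monotone (fun x : ℝ => μ[|{ω | P k ω ≤ x}] {ω | (fun j => P j ω) ∈ A})

/-- False discovery proportion of a rejection set `D` w.r.t. the null set `N`. -/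
def fdp {K : ℕ} (D N : Finset (Fin K)) : ℝ := ((D ∩ N).card : ℝ) / (max D.card 1 : ℕ)

end

/-! The number `R` of BH rejections is a decreasing function of the p-values, so
`{R ≥ r + 1}` is a decreasing set and PRDS makes `t ↦ P(R ≥ r + 1 ∣ P_k ≤ t)` decreasing. Hence
`P(R = r ∣ P_k ≤ αr/K) = β_{k,r} - P(R ≥ r + 1 ∣ P_k ≤ αr/K) ≤ β_{k,r} - β_{k,r+1}`, and the sum
over `r` telescopes to `β_{k,1} - β_{k,K+1} ≤ 1`. -/

section
variable {K : ℕ}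

theorem sortAsc_le_iff (p : Fin K → ℝ) (i : Fin K) (t : ℝ) :
    sortAsc p i ≤ t ↔ (i : ℕ) + 1 ≤ #{j | p j ≤ t} := by
  rw [sortAsc, ← Tuple.lt_card_le_iff_apply_le_of_monotone (Tuple.monotone_sort p),
    Nat.lt_iff_add_one_le]
  congr! 1
  exact card_equiv (Tuple.sort p) fun j => by simp

theorem sortAsc_monotone (p : Fin K → ℝ) : Monotone (sortAsc p) := Tuple.monotone_sort p

theorem monotone_sortAsc_apply (i : Fin K) : Monotone fun p : Fin K → ℝ => sortAsc p i := by
  intro p q hpq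
  rw [sortAsc_le_iff]
  refine ((sortAsc_le_iff q i _).1 le_rfl).trans (card_le_card fun j => ?_)
  simp only [mem_filter, mem_univ, true_and]
  exact (hpq j).trans

theorem measurable_sortAsc_apply (i : Fin K) : Measurable fun p : Fin K → ℝ => sortAsc p i := by
  refine measurable_of_Iic fun t => ?_
  simp only [Set.preimage, Set.mem_Iic, sortAsc_le_iff, card_filter]
  refine measurableSet_le measurable_const (Finset.measurable_sum _ fun j _ => ?_)
  exact Measurable.ite (measurableSet_le (measurable_pi_apply j) measurable_const)
    measurable_const measurable_const

theorem bh_criterion_iff (i : Fin K) (α s : ℝ) :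
    (K : ℝ) * s / (i + 1) ≤ α ↔ s ≤ α * (i + 1) / K := by
  have hK : (0 : ℝ) < K := by exact_mod_cast i.pos
  rw [div_le_iff₀ (by positivity), le_div_iff₀ hK, mul_comm]

variable {α : ℝ}

theorem le_bhCount_of_sortAsc_le {p : Fin K → ℝ} {i : Fin K}
    (h : sortAsc p i ≤ α * (i + 1) / K) : (i : ℕ) + 1 ≤ bhCount K α p :=
  le_sup (f := fun i : Fin K => (i : ℕ) + 1)
    (mem_filter.2 ⟨mem_univ _, (bh_criterion_iff i α _).2 h⟩)

theorem exists_bhCount_eq {p : Fin K → ℝ} (h : bhCount K α p ≠ 0) :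
    ∃ i : Fin K, bhCount K α p = i + 1 ∧ sortAsc p i ≤ α * (i + 1) / K := by
  have hne : (univ.filter fun i : Fin K => (K : ℝ) * sortAsc p i / (i + 1) ≤ α).Nonempty := by
    contrapose! h
    rw [bhCount, h, sup_empty, Nat.bot_eq_zero]
  obtain ⟨i, hi, hmax⟩ := exists_mem_eq_sup _ hne fun i : Fin K => (i : ℕ) + 1
  exact ⟨i, hmax, (bh_criterion_iff i α _).1 (mem_filter.1 hi).2⟩

theorem card_bhRejects (hα : 0 < α) (p : Fin K → ℝ) :
    #(bhRejects K α p) = bhCount K α p := by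
  rcases eq_or_ne (bhCount K α p) 0 with h0 | h0
  · simp [bhRejects, h0]
  obtain ⟨i, hc, hi⟩ := exists_bhCount_eq h0
  have hrej : bhRejects K α p = ({k | p k ≤ sortAsc p i} : Finset (Fin K)) := by
    ext k
    simp only [bhRejects, mem_filter, mem_univ, true_and]
    refine ⟨fun ⟨j, hj, hpj⟩ => hpj.trans (sortAsc_monotone p ?_),
      fun hpi => ⟨i, hc.ge, hpi⟩⟩
    rw [Fin.le_iff_val_le_val]
    omega
  rw [hrej]
  set m := #{k | p k ≤ sortAsc p i}
  have hcm : bhCount K α p ≤ m := hc ▸ (sortAsc_le_iff p i _).1 le_rfl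
  have hmK : m - 1 < K := by
    have := card_le_univ ({k | p k ≤ sortAsc p i} : Finset (Fin K))
    rw [Fintype.card_fin] at this
    omega
  have hmc : m ≤ bhCount K α p := by
    have := le_bhCount_of_sortAsc_le (α := α) (p := p) (i := ⟨m - 1, hmK⟩) <| calc
      sortAsc p ⟨m - 1, hmK⟩ ≤ sortAsc p i := (sortAsc_le_iff p _ _).2 (by simp only; omega)
      _ ≤ α * (i + 1) / K := hi
      _ ≤ α * ((m - 1 : ℕ) + 1) / K := by
        gcongr
        exact_mod_cast (by omega : (i : ℕ) ≤ m - 1)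
    simp only at this
    omega
  omega

theorem bhCount_antitone (α : ℝ) : Antitone (bhCount K α) := by
  refine fun p q hpq => sup_mono fun i => ?_
  simp only [mem_filter, mem_univ, true_and, bh_criterion_iff]
  exact (monotone_sortAsc_apply i hpq).trans

theorem measurable_bhCount (α : ℝ) : Measurable (bhCount K α) := by
  have hsup : bhCount K α =
      univ.sup fun i p => if (K : ℝ) * sortAsc p i / (i + 1) ≤ α then i.1 + 1 else 0 := by
    ext p
    simp [bhCount, Finset.sup_apply, sup_ite]
  rw [hsup]
  refine Finset.sup_induction measurable_const (fun f hf g hg => hf.sup hg) fun i _ => ?_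
  have hcrit := ((measurable_sortAsc_apply i).const_mul (K : ℝ)).div_const ((i : ℝ) + 1)
  exact Measurable.ite (measurableSet_le hcrit measurable_const) measurable_const measurable_const

end

theorem sum_Icc_le_of_le_sub_succ {a β : ℕ → ℝ} {n : ℕ}
    (h : ∀ r ∈ Icc 1 n, a r ≤ β r - β (r + 1)) :
    ∑ r ∈ Icc 1 n, a r ≤ β 1 - β (n + 1) := by
  induction n with
  | zero => simp
  | succ n ih =>
    rw [sum_Icc_succ_top (by omega)]
    linarith [ih fun r hr => h r (Icc_subset_Icc_right n.le_succ hr), h (n + 1) (by simp)]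

namespace PRDS

variable {Ω : Type*} [MeasurableSpace Ω] {μ : Measure Ω} [IsFiniteMeasure μ] {K : ℕ}
  {P : Fin K → Ω → ℝ} {N : Finset (Fin K)} {k : Fin K} {x y : ℝ}

theorem cond_le_of_isLowerSet (h : PRDS μ P N) (hP : ∀ j, Measurable (P j)) (hk : k ∈ N)
    {D : Set (Fin K → ℝ)} (hD : MeasurableSet D) (hDl : IsLowerSet D) (hxy : x ≤ y)
    (hx : μ {ω | P k ω ≤ x} ≠ 0) :
    μ[|{ω | P k ω ≤ y}] {ω | (fun j => P j ω) ∈ D} ≤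
      μ[|{ω | P k ω ≤ x}] {ω | (fun j => P j ω) ∈ D} := by
  set E := {ω | (fun j => P j ω) ∈ D}
  have hE : MeasurableSet E := hD.preimage (measurable_pi_lambda _ hP)
  have hcompl : μ[|{ω | P k ω ≤ x}] Eᶜ ≤ μ[|{ω | P k ω ≤ y}] Eᶜ :=
    h k hk Dᶜ hD.compl (fun a ha b hab => hDl.compl hab ha) hxy
  have := cond_isProbabilityMeasure_of_finite hx (measure_ne_top _ _)
  calc μ[|{ω | P k ω ≤ y}] E ≤ 1 - μ[|{ω | P k ω ≤ y}] Eᶜ :=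
        ENNReal.le_sub_of_add_le_right (measure_ne_top _ _)
          ((measure_add_measure_compl hE).trans_le prob_le_one)
    _ ≤ 1 - μ[|{ω | P k ω ≤ x}] Eᶜ := tsub_le_tsub_left hcompl 1
    _ = μ[|{ω | P k ω ≤ x}] E := by
        rw [prob_compl_eq_one_sub hE, ENNReal.sub_sub_cancel ENNReal.one_ne_top prob_le_one]

theorem cond_eq_le_sub (h : PRDS μ P N) (hP : ∀ j, Measurable (P j)) (hk : k ∈ N)
    {T : (Fin K → ℝ) → ℕ} (hT : Antitone T) (hTm : Measurable T) (hxy : x ≤ y)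
    (hx : μ {ω | P k ω ≤ x} ≠ 0) (r : ℕ) :
    (μ[|{ω | P k ω ≤ x}] {ω | T (fun j => P j ω) = r}).toReal ≤
      (μ[|{ω | P k ω ≤ x}] {ω | r ≤ T (fun j => P j ω)}).toReal -
        (μ[|{ω | P k ω ≤ y}] {ω | r + 1 ≤ T (fun j => P j ω)}).toReal := by
  have hD : MeasurableSet {z | r + 1 ≤ T z} := hTm measurableSet_Ici
  have hE : MeasurableSet {ω | r + 1 ≤ T (fun j => P j ω)} :=
    hD.preimage (measurable_pi_lambda _ hP)
  have hsplit : μ[|{ω | P k ω ≤ x}] {ω | r ≤ T (fun j => P j ω)} =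
      μ[|{ω | P k ω ≤ x}] {ω | T (fun j => P j ω) = r} +
        μ[|{ω | P k ω ≤ x}] {ω | r + 1 ≤ T (fun j => P j ω)} := by
    rw [← measure_union _ hE]
    · congr 1
      ext ω
      simp only [Set.mem_union, Set.mem_ofPred_eq]
      omega
    · exact Set.disjoint_left.2 fun ω h1 h2 => by simp_all
  have hprds : μ[|{ω | P k ω ≤ y}] {ω | r + 1 ≤ T (fun j => P j ω)} ≤
      μ[|{ω | P k ω ≤ x}] {ω | r + 1 ≤ T (fun j => P j ω)} :=
    h.cond_le_of_isLowerSet hP hk hD (fun a b hab hb => hb.trans (hT hab)) hxy hx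
  rw [hsplit, ENNReal.toReal_add (measure_ne_top _ _) (measure_ne_top _ _)]
  linarith [ENNReal.toReal_mono (measure_ne_top _ _) hprds]

end PRDS

theorem prds_beta_telescoping_general
    {Ω : Type*} [MeasurableSpace Ω] (μ : Measure Ω) [IsProbabilityMeasure μ]
    {K : ℕ} {α : ℝ} (hα : α ∈ Set.Ioo (0 : ℝ) 1)
    (P : Fin K → Ω → ℝ) (hP : ∀ k, Measurable (P k)) (N : Finset (Fin K))
    (h_prds : PRDS μ P N) (k : Fin K) (hk : k ∈ N)
    (h_pos : ∀ r ∈ Finset.Icc 1 K, 0 < μ {ω | P k ω ≤ α * r / K}) :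
    (∀ r ∈ Finset.Icc 1 K,
      (μ[|{ω | P k ω ≤ α * r / K}]
          {ω | (bhRejects K α (fun j => P j ω)).card = r}).toReal ≤
        (μ[|{ω | P k ω ≤ α * r / K}]
            {ω | r ≤ (bhRejects K α (fun j => P j ω)).card}).toReal -
          (μ[|{ω | P k ω ≤ α * (r + 1) / K}]
              {ω | r + 1 ≤ (bhRejects K α (fun j => P j ω)).card}).toReal) ∧
    ∑ r ∈ Finset.Icc 1 K,
        (μ[|{ω | P k ω ≤ α * r / K}]
            {ω | (bhRejects K α (fun j => P j ω)).card = r}).toReal ≤ 1 := by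
  simp only [card_bhRejects hα.1]
  have step (r : ℕ) (hr : r ∈ Icc 1 K) :=
    h_prds.cond_eq_le_sub hP hk (bhCount_antitone α) (measurable_bhCount α)
      (x := α * r / K) (y := α * (r + 1) / K)
      (by gcongr; exacts [hα.1.le, le_add_of_nonneg_right zero_le_one]) (h_pos r hr).ne' r
  refine ⟨step, ?_⟩
  set β : ℕ → ℝ := fun r =>
    (μ[|{ω | P k ω ≤ α * r / K}] {ω | r ≤ bhCount K α (fun j => P j ω)}).toReal
  calc _ ≤ β 1 - β (K + 1) := sum_Icc_le_of_le_sub_succ fun r hr => by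
          simpa only [β, Nat.cast_add_one] using step r hr
    _ ≤ 1 := by
      have : β 1 ≤ 1 := ENNReal.toReal_le_of_le_ofReal zero_le_one (by simpa using prob_le_one)
      linarith [show 0 ≤ β (K + 1) from ENNReal.toReal_nonneg]

/-- Under PRDS, for each null index `k` and `r ∈ {1,…,K}`,
`P(R = r ∣ P_k ≤ αr/K) ≤ β_{k,r} − β_{k,r+1}` where `β_{k,r} = P(R ≥ r ∣ P_k ≤ αr/K)`
(note `β_{k,K+1} = 0` since `R ≤ K`); consequently the sum over `r` is at most `1`. -/
theorem prds_beta_telescoping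
    {Ω : Type*} [MeasurableSpace Ω] (μ : Measure Ω) [IsProbabilityMeasure μ]
    {K : ℕ} (hK : 0 < K) {α : ℝ} (hα : α ∈ Set.Ioo (0 : ℝ) 1)
    (P : Fin K → Ω → ℝ) (hP : ∀ k, Measurable (P k)) (N : Finset (Fin K))
    (h_prds : PRDS μ P N) (k : Fin K) (hk : k ∈ N)
    (h_pos : ∀ r ∈ Finset.Icc 1 K, 0 < μ {ω | P k ω ≤ α * r / K}) :
    (∀ r ∈ Finset.Icc 1 K,
      (μ[|{ω | P k ω ≤ α * r / K}]
          {ω | (bhRejects K α (fun j => P j ω)).card = r}).toReal ≤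
        (μ[|{ω | P k ω ≤ α * r / K}]
            {ω | r ≤ (bhRejects K α (fun j => P j ω)).card}).toReal -
          (μ[|{ω | P k ω ≤ α * (r + 1) / K}]
              {ω | r + 1 ≤ (bhRejects K α (fun j => P j ω)).card}).toReal) ∧
    ∑ r ∈ Finset.Icc 1 K,
        (μ[|{ω | P k ω ≤ α * r / K}]
            {ω | (bhRejects K α (fun j => P j ω)).card = r}).toReal ≤ 1 :=
  prds_beta_telescoping_general μ hα P hP N h_prds k hk h_pos
end

section
/- With E_k = φ(P_k) where φ(p) = (K/(αℓ_K · ⌈Kp/α⌉))·1{p ≤ α}, the e-BH procedure at level αℓ_K applied to (E₁,…,E_K) rejects exactly the same hypotheses as the BH procedure at level α applied to (P₁,…,P_K): for each k, k·E_[k]/K ≥ 1/(αℓ_K) if and only if K·P_(k)/k ≤ α. -/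
open MeasureTheory ProbabilityTheory Finset
open scoped ENNReal Classical

/-- The p-to-e calibrator `φ(p) = (K/(α ℓ_K ⌈Kp/α⌉)) 1_{p ≤ α}`, `φ(0) = K/(α ℓ_K)`. -/
noncomputable def phi (K : ℕ) (α : ℝ) (p : ℝ) : ℝ :=
  if p = 0 then (K : ℝ) / (α * harm K)
  else if p ≤ α then (K : ℝ) / (α * harm K * (⌈(K : ℝ) * p / α⌉ : ℤ)) else 0


section AuxLemmas

variable {K : ℕ} {α : ℝ}

lemma harm_pos (hK : 0 < K) : 0 < harm K := by
  apply Finset.sum_pos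
  · intro k hk
    simp only [Finset.mem_Icc] at hk
    have : 0 < k := hk.1
    positivity
  · exact ⟨1, Finset.mem_Icc.mpr ⟨le_refl 1, hK⟩⟩

lemma ceil_pos_of_pos (hK : 0 < K) (hα : 0 < α) {x : ℝ} (hx : 0 < x) :
    (0 : ℤ) < ⌈(K : ℝ) * x / α⌉ := by
  have hK' : (0:ℝ) < K := by exact_mod_cast hK
  exact Int.ceil_pos.mpr (by positivity)

lemma phi_nonneg (hK : 0 < K) (hα : 0 < α) (x : ℝ) (hx : 0 ≤ x) : 0 ≤ phi K α x := by
  have hh := harm_pos hK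
  have hK' : (0:ℝ) < K := by exact_mod_cast hK
  unfold phi
  split_ifs with h1 h2
  · positivity
  · have hx' : 0 < x := lt_of_le_of_ne hx (Ne.symm h1)
    have hc : (0:ℝ) < (⌈(K : ℝ) * x / α⌉ : ℤ) := by exact_mod_cast ceil_pos_of_pos hK hα hx'
    positivity
  · exact le_refl 0

lemma phi_anti (hK : 0 < K) (hα : 0 < α) {x y : ℝ} (hx : 0 ≤ x) (hxy : x ≤ y) :
    phi K α y ≤ phi K α x := by
  have hh := harm_pos hK
  have hK' : (0:ℝ) < K := by exact_mod_cast hK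
  by_cases hyα : y ≤ α
  · have hy0 : 0 ≤ y := le_trans hx hxy
    rcases eq_or_lt_of_le hx with hx0 | hx0
    · -- x = 0
      have h0 : phi K α 0 = (K : ℝ) / (α * harm K) := by rw [phi, if_pos rfl]
      rw [← hx0, h0]
      rcases eq_or_lt_of_le hy0 with hy0' | hy0'
      · rw [← hy0', h0]
      · rw [phi, if_neg (ne_of_gt hy0'), if_pos hyα]
        have hc : (1:ℝ) ≤ ((⌈(K:ℝ) * y / α⌉ : ℤ) : ℝ) := by
          exact_mod_cast ceil_pos_of_pos hK hα hy0'
        refine div_le_div_of_nonneg_left (le_of_lt hK') (by positivity) ?_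
        nlinarith [mul_nonneg (mul_pos hα hh).le (sub_nonneg.mpr hc)]
    · -- 0 < x ≤ y ≤ α
      have hy0' : 0 < y := lt_of_lt_of_le hx0 hxy
      have hcx := ceil_pos_of_pos hK hα hx0
      have hcy := ceil_pos_of_pos hK hα hy0'
      rw [phi, if_neg (ne_of_gt hy0'), if_pos hyα, phi, if_neg (ne_of_gt hx0),
        if_pos (le_trans hxy hyα)]
      have hcx' : (0:ℝ) < (⌈(K : ℝ) * x / α⌉ : ℤ) := by exact_mod_cast hcx
      have hle : ((⌈(K : ℝ) * x / α⌉ : ℤ) : ℝ) ≤ ((⌈(K : ℝ) * y / α⌉ : ℤ) : ℝ) := by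
        exact_mod_cast Int.ceil_le_ceil (by gcongr)
      refine div_le_div_of_nonneg_left (le_of_lt hK') (by positivity) ?_
      nlinarith [mul_nonneg (mul_pos hα hh).le (sub_nonneg.mpr hle)]
  · -- y > α : phi y = 0
    have hy0' : 0 < y := lt_of_lt_of_le hα (le_of_not_ge hyα)
    rw [phi, if_neg (ne_of_gt hy0'), if_neg hyα]
    exact phi_nonneg hK hα x hx

lemma key_iff (hK : 0 < K) (hα : 0 < α) {q : ℝ} (hq0 : 0 ≤ q) {k : ℕ}
    (hk1 : 1 ≤ k) (hkK : k ≤ K) :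
    1 / (α * harm K) ≤ (k : ℝ) * phi K α q / K ↔ (K : ℝ) * q / k ≤ α := by
  have hh := harm_pos hK
  have hK' : (0:ℝ) < K := by exact_mod_cast hK
  have hk' : (1:ℝ) ≤ (k:ℝ) := by exact_mod_cast hk1
  have hk0 : (0:ℝ) < (k:ℝ) := by linarith
  have hkK' : (k:ℝ) ≤ K := by exact_mod_cast hkK
  have hA : 0 < α * harm K := by positivity
  rcases eq_or_lt_of_le hq0 with hq | hq
  · -- q = 0
    rw [← hq, phi, if_pos rfl]
    constructor
    · intro _
      rw [mul_zero, zero_div]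
      positivity
    · intro _
      rw [show (k:ℝ) * ((K:ℝ) / (α * harm K)) / K = k / (α * harm K) by field_simp]
      gcongr
  · by_cases hqα : q ≤ α
    · -- 0 < q ≤ α
      have hc := ceil_pos_of_pos hK hα hq
      have hc' : (0:ℝ) < (⌈(K : ℝ) * q / α⌉ : ℤ) := by exact_mod_cast hc
      rw [phi, if_neg (ne_of_gt hq), if_pos hqα]
      rw [show (k:ℝ) * ((K:ℝ) / (α * harm K * (⌈(K : ℝ) * q / α⌉ : ℤ))) / K
            = k / (α * harm K * (⌈(K : ℝ) * q / α⌉ : ℤ)) by field_simp]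
      rw [div_le_div_iff₀ hA (by positivity), div_le_iff₀ hk0]
      constructor
      · intro h
        have hck : ((⌈(K : ℝ) * q / α⌉ : ℤ) : ℝ) ≤ k := by nlinarith
        have := le_trans (Int.le_ceil ((K : ℝ) * q / α)) hck
        rw [div_le_iff₀ hα] at this
        linarith
      · intro h
        have h2 : (K : ℝ) * q / α ≤ k := by rw [div_le_iff₀ hα]; linarith
        have hck : (⌈(K : ℝ) * q / α⌉ : ℤ) ≤ (k : ℤ) := Int.ceil_le.mpr (by exact_mod_cast h2)
        have hck' : ((⌈(K : ℝ) * q / α⌉ : ℤ) : ℝ) ≤ k := by exact_mod_cast hck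
        nlinarith
    · -- α < q
      have hqα' : α < q := lt_of_not_ge hqα
      rw [phi, if_neg (ne_of_gt hq), if_neg hqα]
      constructor
      · intro h
        exfalso
        rw [mul_zero, zero_div] at h
        have : (0:ℝ) < 1 / (α * harm K) := by positivity
        linarith
      · intro h
        exfalso
        rw [div_le_iff₀ hk0] at h
        nlinarith

lemma sortDesc_phi (hK : 0 < K) (hα : 0 < α) (p : Fin K → ℝ)
    (hp : ∀ k, 0 ≤ p k) (i : Fin K) :
    sortDesc (fun k => phi K α (p k)) i = phi K α (sortAsc p i) := by
  set e : Fin K → ℝ := fun k => phi K α (p k) with he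
  have hmono : Monotone ((fun j => -e j) ∘ (Tuple.sort p : Equiv.Perm (Fin K))) := by
    intro a b hab
    simp only [Function.comp, he, neg_le_neg_iff]
    exact phi_anti hK hα (hp _) (Tuple.monotone_sort p hab)
  have hkey : (fun j => -e j) ∘ (Tuple.sort p : Equiv.Perm (Fin K))
      = (fun j => -e j) ∘ Tuple.sort (fun j => -e j) :=
    Tuple.comp_sort_eq_comp_iff_monotone.mpr hmono
  have h2 := congrFun hkey i
  simp only [Function.comp, neg_inj] at h2
  show e (Tuple.sort (fun j => -e j) i) = phi K α (p (Tuple.sort p i))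
  rw [← h2]

end AuxLemmas

/-- With `E_k = φ(P_k)`, e-BH at level `α ℓ_K` rejects exactly the same hypotheses as BH
at level `α`: for each `k`, `k E_[k] / K ≥ 1/(α ℓ_K)` iff `K P_(k) / k ≤ α`. -/
theorem ebh_phi_equals_bh
    {K : ℕ} (hK : 0 < K) {α : ℝ} (hα : α ∈ Set.Ioo (0 : ℝ) 1)
    (p : Fin K → ℝ) (hp : ∀ k, p k ∈ Set.Icc (0 : ℝ) 1) :
    (∀ i : Fin K,
      1 / (α * harm K) ≤ (i.1 + 1 : ℝ) * sortDesc (fun k => phi K α (p k)) i / K ↔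
        (K : ℝ) * sortAsc p i / (i.1 + 1) ≤ α) ∧
    ebhRejects K (α * harm K) (fun k => phi K α (p k)) = bhRejects K α p := by
  obtain ⟨hα0, hα1⟩ := hα
  have hh := harm_pos hK
  have hsd : ∀ i : Fin K, sortDesc (fun k => phi K α (p k)) i = phi K α (sortAsc p i) :=
    sortDesc_phi hK hα0 p (fun k => (hp k).1)
  have hq0 : ∀ i : Fin K, 0 ≤ sortAsc p i := fun i => (hp _).1
  have hiff : ∀ i : Fin K,
      1 / (α * harm K) ≤ (i.1 + 1 : ℝ) * sortDesc (fun k => phi K α (p k)) i / K ↔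
        (K : ℝ) * sortAsc p i / (i.1 + 1) ≤ α := by
    intro i
    rw [hsd i]
    have h1 : 1 ≤ i.1 + 1 := Nat.succ_le_succ (Nat.zero_le _)
    have h2 : i.1 + 1 ≤ K := i.2
    have h3 := key_iff hK hα0 (hq0 i) h1 h2
    push_cast at h3
    exact h3
  refine ⟨hiff, ?_⟩
  have hcount : ebhCount K (α * harm K) (fun k => phi K α (p k)) = bhCount K α p := by
    unfold ebhCount bhCount
    congr 1
    exact Finset.filter_congr (fun i _ => hiff i)
  ext k
  simp only [ebhRejects, bhRejects, Finset.mem_filter, Finset.mem_univ, true_and, hcount]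
  constructor
  · rintro ⟨i, hi, hle⟩
    rw [hsd i] at hle
    set S := Finset.univ.filter
      (fun i : Fin K => (K : ℝ) * sortAsc p i / (i.1 + 1) ≤ α) with hS
    have hcS : bhCount K α p = S.sup (fun i => i.1 + 1) := rfl
    have hne : S.Nonempty := by
      by_contra h
      rw [Finset.not_nonempty_iff_eq_empty] at h
      rw [hcS, h] at hi
      simp at hi
    obtain ⟨i₀, hi₀S, hc⟩ := Finset.exists_mem_eq_sup S hne (fun i => i.1 + 1)
    rw [hcS, hc] at hi
    by_cases hpk : p k ≤ sortAsc p i₀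
    · exact ⟨i₀, by rw [hcS, ← hc], hpk⟩
    · exfalso
      push_neg at hpk
      set j : Fin K := (Tuple.sort p).symm k with hj
      have hqj : sortAsc p j = p k := by
        simp [sortAsc, hj, Function.comp]
      have hij : i₀ < j := by
        by_contra hle2
        push_neg at hle2
        exact absurd (hqj ▸ Tuple.monotone_sort p hle2) (not_le.mpr hpk)
      have hii₀ : i ≤ i₀ := by
        have h4 : i.1 + 1 ≤ i₀.1 + 1 := hi
        exact Fin.le_def.mpr (by omega)
      have h1 : phi K α (sortAsc p i₀) ≤ phi K α (p k) :=
        le_trans (phi_anti hK hα0 (hq0 i) (Tuple.monotone_sort p hii₀)) hle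
      have hbh₀ : (K : ℝ) * sortAsc p i₀ / (i₀.1 + 1) ≤ α := (Finset.mem_filter.mp hi₀S).2
      have he₀ := (hiff i₀).mpr hbh₀
      rw [hsd i₀] at he₀
      have hj1 : ((i₀.1 : ℝ) + 1) ≤ ((j.1 : ℝ) + 1) := by
        have h5 : i₀.1 < j.1 := hij
        exact_mod_cast Nat.succ_le_succ h5.le
      have hK' : (0:ℝ) < K := by exact_mod_cast hK
      have hmul : ((i₀.1 : ℝ) + 1) * phi K α (sortAsc p i₀)
          ≤ ((j.1 : ℝ) + 1) * phi K α (p k) :=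
        mul_le_mul hj1 h1 (phi_nonneg hK hα0 _ (hq0 i₀)) (by positivity)
      have hej : 1 / (α * harm K) ≤ ((j.1 : ℝ) + 1) * sortDesc (fun k => phi K α (p k)) j / K := by
        rw [hsd j, hqj]
        calc 1 / (α * harm K) ≤ ((i₀.1 : ℝ) + 1) * phi K α (sortAsc p i₀) / K := he₀
          _ ≤ ((j.1 : ℝ) + 1) * phi K α (p k) / K :=
              div_le_div_of_nonneg_right hmul hK'.le
      have hjS : j ∈ S := Finset.mem_filter.mpr ⟨Finset.mem_univ j, (hiff j).mp hej⟩
      have h6 : j.1 + 1 ≤ i₀.1 + 1 := hc ▸ Finset.le_sup (f := fun i : Fin K => i.1 + 1) hjS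
      have h5 : i₀.1 < j.1 := hij
      omega
  · rintro ⟨i, hi, hle⟩
    refine ⟨i, hi, ?_⟩
    rw [hsd i]
    exact phi_anti hK hα0 (hp k).1 hle
end
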